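/- Let α be a nonzero real number and define the 2×2 real matrices X = π·[[0, α], [−1/α, 0]] and Y = π·[[0, (10 + 4√6)α], [(−10 + 4√6)/α, 0]]. Then exp(X+Y) = exp(X)·exp(Y) = exp(Y)·exp(X), even though XY ≠ YX (i.e. [X,Y] ≠ 0). -/

import Mathlib

/-!
A real matrix `J` with `J * J = -1` generates a copy of `ℂ`, so `exp (t • J) = cos t + sin t • J`;
in particular `exp ((n * π) • J) = (-1) ^ n`. Each of `X`, `Y` and `X + Y` has this form,
with `n = 1, 2, 5` respectively, because the antidiagonal matrix `!![0, a; b, 0]` squares to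
`a * b` and the constants `10 ± 4√6` are chosen so that the relevant products equal `-1`.
Hence `exp X = -1`, `exp Y = 1` and `exp (X + Y) = -1`, while the `(0, 0)` entries of `X * Y`
and `Y * X` differ by `8√6 π²`.
-/

open Real NormedSpace

section NormedAlgebra

variable {A : Type*} [NormedRing A] [NormedAlgebra ℝ A] {J : A}

theorem NormedSpace.exp_smul_of_mul_self_eq_neg_one (hJ : J * J = -1) (t : ℝ) :
    exp (t • J) = cos t • (1 : A) + sin t • J := by
  -- `exp` does not depend on the choice of `ℚ`-algebra structure
  let : Algebra ℚ A := Algebra.compHom A (algebraMap ℚ ℝ)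
  let φ := Complex.liftAux J hJ
  have hφ : Continuous φ := φ.toLinearMap.continuous_of_finiteDimensional
  calc exp (t • J) = φ (exp (t * Complex.I)) := by
        rw [map_exp φ hφ]; simp [φ]
    _ = cos t • 1 + sin t • J := by
        rw [← Complex.exp_eq_exp_ℂ, Complex.exp_mul_I]
        simp [φ, Algebra.algebraMap_eq_smul_one, ← Complex.ofReal_cos, ← Complex.ofReal_sin]

theorem NormedSpace.exp_nat_mul_pi_smul_of_mul_self_eq_neg_one (hJ : J * J = -1) (n : ℕ) :
    exp ((n * π) • J) = (-1) ^ n := by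
  rw [exp_smul_of_mul_self_eq_neg_one hJ, cos_nat_mul_pi, sin_nat_mul_pi, zero_smul, add_zero,
    ← Algebra.algebraMap_eq_smul_one, map_pow, map_neg, map_one]

end NormedAlgebra

namespace Matrix

theorem exp_nat_mul_pi_smul_of_mul_self_eq_neg_one {m : Type*} [Fintype m] [DecidableEq m]
    {J : Matrix m m ℝ} (hJ : J * J = -1) (n : ℕ) : exp ((n * π) • J) = (-1) ^ n := by
  let : NormedRing (Matrix m m ℝ) := Matrix.linftyOpNormedRing
  let : NormedAlgebra ℝ (Matrix m m ℝ) := Matrix.linftyOpNormedAlgebra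
  exact NormedSpace.exp_nat_mul_pi_smul_of_mul_self_eq_neg_one hJ n

variable {R : Type*} [CommRing R]

theorem antidiag_mul_antidiag (a b c d : R) :
    !![0, a; b, 0] * !![0, c; d, 0] = !![a * d, 0; 0, b * c] := by
  simp

theorem antidiag_mul_self_eq_neg_one {a b : R} (h : a * b = -1) :
    !![0, a; b, 0] * !![0, a; b, 0] = -1 := by
  rw [antidiag_mul_antidiag, h, mul_comm, h, one_fin_two]
  simp

end Matrix

theorem exp_add_eq_exp_mul_exp_of_noncommuting (α : ℝ) (hα : α ≠ 0)
    (X Y : Matrix (Fin 2) (Fin 2) ℝ)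
    (hX : X = π • !![0, α; -1 / α, 0])
    (hY : Y = π • !![0, (10 + 4 * Real.sqrt 6) * α; (-10 + 4 * Real.sqrt 6) / α, 0]) :
    NormedSpace.exp (X + Y) = NormedSpace.exp X * NormedSpace.exp Y ∧
      NormedSpace.exp (X + Y) = NormedSpace.exp Y * NormedSpace.exp X ∧
      X * Y ≠ Y * X := by
  have hs6 : √6 * √6 = 6 := mul_self_sqrt (by norm_num)
  have hX' : X = ((1 : ℕ) * π) • !![0, α; -1 / α, 0] := by
    rw [hX, Nat.cast_one, one_mul]
  have hY' : Y = ((2 : ℕ) * π) • !![0, (5 + 2 * √6) * α; (-5 + 2 * √6) / α, 0] := by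
    rw [hY]; ext i j; fin_cases i <;> fin_cases j <;> simp <;> ring
  have hXY :
      X + Y = ((5 : ℕ) * π) • !![0, (11 + 4 * √6) / 5 * α; (-11 + 4 * √6) / (5 * α), 0] := by
    rw [hX, hY]; ext i j; fin_cases i <;> fin_cases j <;> simp <;> ring
  have hexpX : exp X = -1 := by
    rw [hX', Matrix.exp_nat_mul_pi_smul_of_mul_self_eq_neg_one
      (Matrix.antidiag_mul_self_eq_neg_one (by field_simp)), pow_one]
  have hexpY : exp Y = 1 := by
    rw [hY', Matrix.exp_nat_mul_pi_smul_of_mul_self_eq_neg_one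
      (Matrix.antidiag_mul_self_eq_neg_one (by field_simp; linear_combination 4 * hs6)), neg_one_sq]
  have hexpXY : exp (X + Y) = -1 := by
    rw [hXY, Matrix.exp_nat_mul_pi_smul_of_mul_self_eq_neg_one
      (Matrix.antidiag_mul_self_eq_neg_one (by field_simp; linear_combination 16 * hs6)),
      Odd.neg_one_pow (by decide)]
  refine ⟨by rw [hexpXY, hexpX, hexpY, mul_one], by rw [hexpXY, hexpX, hexpY, one_mul], ?_⟩
  have hdiff : (X * Y) 0 0 - (Y * X) 0 0 = 8 * √6 * π ^ 2 := by
    simp only [hX, hY, smul_mul_smul_comm, Matrix.antidiag_mul_antidiag, Matrix.smul_apply,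
      Matrix.of_apply, Matrix.cons_val_zero, smul_eq_mul]
    field_simp; ring
  intro hcomm
  rw [hcomm, sub_self] at hdiff
  exact (by positivity : (0 : ℝ) < 8 * √6 * π ^ 2).ne hdiff
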